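/- Let H be a Hopf G-bialgebra over a field. Then the antipode is an anti-homomorphism for the coproduct: for all α, β, γ ∈ G and z ∈ H_{α+β}^γ, one has (S_{α+β}^γ(z))_{(1,-α)} ⊗ (S_{α+β}^γ(z))_{(2,-β)} = S_α^γ(z_{(2,α)}) ⊗ S_β^γ(z_{(1,β)}), i.e. Δ_{-α,-β}^{-γ} ∘ S_{α+β}^γ = (S_α^γ ⊗ S_β^γ) ∘ τ ∘ Δ_{β,α}^γ, where τ is the flip of tensor factors. -/
import Mathlib


open TensorProduct

/-- A Hopf `G`-bialgebra (De Renzi–Martel–Wang), modeled inside an ambient `k`-vector space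
`A` containing all the components `H α β`.  The structure operations are given as global
linear maps, and the axioms (H1)–(H9) are required on graded elements. -/
structure HopfGBialgebra (k : Type*) (G : Type*) [Field k] [AddCommGroup G] where
  /-- ambient vector space -/
  A : Type*
  [addCommGroup : AddCommGroup A]
  [module : Module k A]
  /-- the components `H α β` -/
  H : G → G → Submodule k A
  /-- product `μ` -/
  mul : A →ₗ[k] A →ₗ[k] A
  /-- units `η_α(1) = 1_α` -/
  one : G → A
  /-- coproducts `Δ_{α,β}` -/
  comul : G → G → A →ₗ[k] A ⊗[k] A
  /-- counits `ε^β` -/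
  counit : G → A →ₗ[k] k
  /-- antipodes `S_α^β` -/
  S : G → G → A →ₗ[k] A
  mul_mem : ∀ {α β γ : G} {x y : A}, x ∈ H α β → y ∈ H α γ → mul x y ∈ H α (β + γ)
  one_mem : ∀ α : G, one α ∈ H α 0
  comul_mem : ∀ {α β γ : G} {x : A}, x ∈ H (α + β) γ →
    comul α β x ∈ LinearMap.range (TensorProduct.map (H α γ).subtype (H β γ).subtype)
  S_mem : ∀ {α β : G} {x : A}, x ∈ H α β → S α β x ∈ H (-α) (-β)
  /-- (H1) associativity -/
  mul_assoc' : ∀ {α β γ δ : G} {x y z : A}, x ∈ H α β → y ∈ H α γ → z ∈ H α δ →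
    mul (mul x y) z = mul x (mul y z)
  /-- (H2) unitality -/
  one_mul' : ∀ {α β : G} {x : A}, x ∈ H α β → mul (one α) x = x
  mul_one' : ∀ {α β : G} {x : A}, x ∈ H α β → mul x (one α) = x
  /-- (H3) coassociativity -/
  coassoc : ∀ (α β γ δ : G) (x : A), x ∈ H (α + β + γ) δ →
    (TensorProduct.assoc k A A A)
        ((TensorProduct.map (comul α β) LinearMap.id) (comul (α + β) γ x)) =
      (TensorProduct.map LinearMap.id (comul β γ)) (comul α (β + γ) x)
  /-- (H4) counitality -/
  counit_comul : ∀ (α β : G) (x : A), x ∈ H α β →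
    (TensorProduct.lid k A) ((TensorProduct.map (counit β) LinearMap.id) (comul 0 α x)) = x
  comul_counit : ∀ (α β : G) (x : A), x ∈ H α β →
    (TensorProduct.rid k A) ((TensorProduct.map LinearMap.id (counit β)) (comul α 0 x)) = x
  /-- (H5) compatibility of product and coproduct -/
  comul_mul : ∀ (α β γ δ : G) (x y : A), x ∈ H (α + β) γ → y ∈ H (α + β) δ →
    comul α β (mul x y) =
      (TensorProduct.map (TensorProduct.lift mul) (TensorProduct.lift mul))
        ((TensorProduct.tensorTensorTensorComm k A A A A) (comul α β x ⊗ₜ[k] comul α β y))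
  /-- (H6) -/
  counit_mul : ∀ (α β : G) (x y : A), x ∈ H 0 α → y ∈ H 0 β →
    counit (α + β) (mul x y) = counit α x * counit β y
  /-- (H7) -/
  comul_one : ∀ α β : G, comul α β (one (α + β)) = one α ⊗ₜ[k] one β
  /-- (H8) -/
  counit_one : counit 0 (one 0) = 1
  /-- (H9) antipode axiom -/
  antipode_left : ∀ (α β : G) (x : A), x ∈ H 0 β →
    TensorProduct.lift mul ((TensorProduct.map (S (-α) β) LinearMap.id) (comul (-α) α x)) =
      counit β x • one α
  antipode_right : ∀ (α β : G) (x : A), x ∈ H 0 β →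
    TensorProduct.lift mul ((TensorProduct.map LinearMap.id (S (-α) β)) (comul α (-α) x)) =
      counit β x • one α

attribute [instance] HopfGBialgebra.addCommGroup HopfGBialgebra.module

namespace HopfGBialgebra

variable {k G : Type*} [Field k] [AddCommGroup G] (Hb : HopfGBialgebra k G)

/-- componentwise multiplication on `A ⊗ A`. -/
noncomputable def mmF : (Hb.A ⊗[k] Hb.A) ⊗[k] (Hb.A ⊗[k] Hb.A) →ₗ[k] Hb.A ⊗[k] Hb.A :=
  (TensorProduct.map (TensorProduct.lift Hb.mul) (TensorProduct.lift Hb.mul)) ∘ₗ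
    (TensorProduct.tensorTensorTensorComm k Hb.A Hb.A Hb.A Hb.A).toLinearMap

@[simp] lemma mmF_tmul (a b c d : Hb.A) :
    Hb.mmF ((a ⊗ₜ[k] b) ⊗ₜ[k] (c ⊗ₜ[k] d)) = (Hb.mul a c) ⊗ₜ[k] (Hb.mul b d) := by
  simp [mmF]

lemma comul_repr {a b c : G} {x : Hb.A} (hx : x ∈ Hb.H (a + b) c) :
    ∃ T : Finset (↥(Hb.H a c) × ↥(Hb.H b c)),
      Hb.comul a b x = ∑ p ∈ T, ((p.1 : Hb.A) ⊗ₜ[k] (p.2 : Hb.A)) := by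
  obtain ⟨y, hy⟩ := Hb.comul_mem hx
  obtain ⟨T, hT⟩ := TensorProduct.exists_finset y
  refine ⟨T, ?_⟩
  rw [← hy, hT, map_sum]
  simp

lemma comul_mul' {a b c d : G} {x y : Hb.A} (hx : x ∈ Hb.H (a + b) c) (hy : y ∈ Hb.H (a + b) d) :
    Hb.comul a b (Hb.mul x y) = Hb.mmF (Hb.comul a b x ⊗ₜ[k] Hb.comul a b y) := by
  rw [Hb.comul_mul a b c d x y hx hy]; simp [mmF]

lemma antipode_left' (a c : G) (x : Hb.A) (hx : x ∈ Hb.H 0 c) :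
    TensorProduct.lift Hb.mul
        ((TensorProduct.map (Hb.S a c) LinearMap.id) (Hb.comul a (-a) x)) =
      Hb.counit c x • Hb.one (-a) := by
  simpa using Hb.antipode_left (-a) c x hx

lemma antipode_right' (a c : G) (x : Hb.A) (hx : x ∈ Hb.H 0 c) :
    TensorProduct.lift Hb.mul
        ((TensorProduct.map LinearMap.id (Hb.S a c)) (Hb.comul (-a) a x)) =
      Hb.counit c x • Hb.one (-a) := by
  simpa using Hb.antipode_right (-a) c x hx

/-- right multiplication by `1 ⊗ 1` is the identity on suitably graded tensors. -/
lemma mmF_one_right {a b d1 d2 : G} {u : Hb.A ⊗[k] Hb.A}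
    (hu : u ∈ LinearMap.range (TensorProduct.map (Hb.H a d1).subtype (Hb.H b d2).subtype)) :
    Hb.mmF (u ⊗ₜ[k] (Hb.one a ⊗ₜ[k] Hb.one b)) = u := by
  obtain ⟨y, rfl⟩ := hu
  induction y using TensorProduct.induction_on with
  | zero => simp
  | tmul p q => simp [Hb.mul_one' p.2, Hb.mul_one' q.2]
  | add y₁ y₂ h₁ h₂ => simp only [map_add, add_tmul, h₁, h₂]

lemma mmF_one_left {a b d1 d2 : G} {u : Hb.A ⊗[k] Hb.A}
    (hu : u ∈ LinearMap.range (TensorProduct.map (Hb.H a d1).subtype (Hb.H b d2).subtype)) :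
    Hb.mmF ((Hb.one a ⊗ₜ[k] Hb.one b) ⊗ₜ[k] u) = u := by
  obtain ⟨y, rfl⟩ := hu
  induction y using TensorProduct.induction_on with
  | zero => simp
  | tmul p q => simp [Hb.one_mul' p.2, Hb.one_mul' q.2]
  | add y₁ y₂ h₁ h₂ => simp only [map_add, tmul_add, h₁, h₂]

lemma mmF_assoc {a b d1 d2 d3 d4 d5 d6 : G} {u v w : Hb.A ⊗[k] Hb.A}
    (hu : u ∈ LinearMap.range (TensorProduct.map (Hb.H a d1).subtype (Hb.H b d2).subtype))
    (hv : v ∈ LinearMap.range (TensorProduct.map (Hb.H a d3).subtype (Hb.H b d4).subtype))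
    (hw : w ∈ LinearMap.range (TensorProduct.map (Hb.H a d5).subtype (Hb.H b d6).subtype)) :
    Hb.mmF (u ⊗ₜ[k] Hb.mmF (v ⊗ₜ[k] w)) = Hb.mmF (Hb.mmF (u ⊗ₜ[k] v) ⊗ₜ[k] w) := by
  obtain ⟨yu, rfl⟩ := hu
  obtain ⟨yv, rfl⟩ := hv
  obtain ⟨yw, rfl⟩ := hw
  induction yu using TensorProduct.induction_on with
  | zero => simp
  | add y₁ y₂ h₁ h₂ => simp only [map_add, add_tmul, h₁, h₂]
  | tmul p q =>
    induction yv using TensorProduct.induction_on with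
    | zero => simp
    | add y₁ y₂ h₁ h₂ => simp only [map_add, add_tmul, tmul_add, h₁, h₂]
    | tmul r s =>
      induction yw using TensorProduct.induction_on with
      | zero => simp
      | add y₁ y₂ h₁ h₂ => simp only [map_add, add_tmul, tmul_add, h₁, h₂]
      | tmul t t' =>
        simp only [TensorProduct.map_tmul, Submodule.coe_subtype, mmF_tmul]
        rw [Hb.mul_assoc' p.2 r.2 t.2, Hb.mul_assoc' q.2 s.2 t'.2]

noncomputable def gmap (α β γ : G) : Hb.A →ₗ[k] Hb.A ⊗[k] Hb.A :=
  (TensorProduct.map (Hb.S α γ) (Hb.S β γ)) ∘ₗ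
    (TensorProduct.comm k Hb.A Hb.A).toLinearMap ∘ₗ Hb.comul β α

lemma gmap_range {α β γ : G} {x : Hb.A} (hx : x ∈ Hb.H (α + β) γ) :
    Hb.gmap α β γ x ∈ LinearMap.range
      (TensorProduct.map (Hb.H (-α) (-γ)).subtype (Hb.H (-β) (-γ)).subtype) := by
  have hx' : x ∈ Hb.H (β + α) γ := by rwa [add_comm]
  obtain ⟨T, hT⟩ := Hb.comul_repr hx'
  have : Hb.gmap α β γ x = ∑ p ∈ T, (Hb.S α γ (p.2 : Hb.A)) ⊗ₜ[k] (Hb.S β γ (p.1 : Hb.A)) := by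
    simp [gmap, hT, map_sum]
  rw [this]
  refine Submodule.sum_mem _ fun p _ => ?_
  exact ⟨(⟨_, Hb.S_mem p.2.2⟩ : ↥(Hb.H (-α) (-γ))) ⊗ₜ[k] (⟨_, Hb.S_mem p.1.2⟩ : ↥(Hb.H (-β) (-γ))),
    by simp⟩

lemma f_range {α β γ : G} {x : Hb.A} (hx : x ∈ Hb.H (α + β) γ) :
    Hb.comul (-α) (-β) (Hb.S (α + β) γ x) ∈ LinearMap.range
      (TensorProduct.map (Hb.H (-α) (-γ)).subtype (Hb.H (-β) (-γ)).subtype) := by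
  refine Hb.comul_mem ?_
  rw [← neg_add]
  exact Hb.S_mem hx

/-- convolution identity: `(Δ ∘ S) * Δ = ε • (1 ⊗ 1)` on `H 0 γ`. -/
lemma lemA (α β γ : G) (x : Hb.A) (hx : x ∈ Hb.H 0 γ) :
    Hb.mmF ((TensorProduct.map (Hb.comul (-α) (-β) ∘ₗ Hb.S (α + β) γ) (Hb.comul (-α) (-β)))
        (Hb.comul (α + β) (-(α + β)) x)) =
      Hb.counit γ x • (Hb.one (-α) ⊗ₜ[k] Hb.one (-β)) := by
  have hx' : x ∈ Hb.H ((α + β) + -(α + β)) γ := by rw [add_neg_cancel]; exact hx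
  obtain ⟨T, hT⟩ := Hb.comul_repr hx'
  have key : ∀ p ∈ T,
      Hb.mmF ((Hb.comul (-α) (-β) (Hb.S (α + β) γ (p.1 : Hb.A))) ⊗ₜ[k]
          (Hb.comul (-α) (-β) (p.2 : Hb.A)))
        = Hb.comul (-α) (-β) (Hb.mul (Hb.S (α + β) γ (p.1 : Hb.A)) (p.2 : Hb.A)) := by
    intro p _
    have h1 : Hb.S (α + β) γ (p.1 : Hb.A) ∈ Hb.H ((-α) + (-β)) (-γ) := by
      rw [← neg_add]; exact Hb.S_mem p.1.2
    have h2 : (p.2 : Hb.A) ∈ Hb.H ((-α) + (-β)) γ := by rw [← neg_add]; exact p.2.2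
    rw [Hb.comul_mul' h1 h2]
  have step1 : Hb.mmF ((TensorProduct.map (Hb.comul (-α) (-β) ∘ₗ Hb.S (α + β) γ)
        (Hb.comul (-α) (-β))) (Hb.comul (α + β) (-(α + β)) x)) =
      Hb.comul (-α) (-β) (∑ p ∈ T, Hb.mul (Hb.S (α + β) γ (p.1 : Hb.A)) (p.2 : Hb.A)) := by
    rw [hT, map_sum, map_sum, map_sum]
    exact Finset.sum_congr rfl fun p hp => by
      simpa using key p hp
  have step2 : (∑ p ∈ T, Hb.mul (Hb.S (α + β) γ (p.1 : Hb.A)) (p.2 : Hb.A)) =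
      Hb.counit γ x • Hb.one (-(α + β)) := by
    have := Hb.antipode_left' (α + β) γ x hx
    rw [hT] at this
    simpa [map_sum] using this
  rw [step1, step2, map_smul, show (-(α + β) : G) = (-α) + (-β) from neg_add _ _,
    Hb.comul_one]

lemma aux1 (h : Hb.A →ₗ[k] Hb.A ⊗[k] Hb.A) (x : Hb.A) (u : Hb.A ⊗[k] Hb.A) :
    (TensorProduct.map LinearMap.id h) ((TensorProduct.assoc k Hb.A Hb.A Hb.A).symm (x ⊗ₜ[k] u))
      = (TensorProduct.assoc k Hb.A Hb.A (Hb.A ⊗[k] Hb.A)).symm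
          (x ⊗ₜ[k] (TensorProduct.map LinearMap.id h u)) := by
  induction u using TensorProduct.induction_on with
  | zero => simp
  | tmul f d => simp
  | add u₁ u₂ h₁ h₂ => simp only [tmul_add, map_add, h₁, h₂]

lemma lemB_inner (α β γ : G) (e y : Hb.A) (hy : y ∈ Hb.H α γ) :
    Hb.mmF ((TensorProduct.map LinearMap.id (Hb.gmap α β γ))
        ((TensorProduct.assoc k Hb.A Hb.A Hb.A).symm (e ⊗ₜ[k] Hb.comul (-β) (α + β) y)))
      = (Hb.mul e (Hb.S α γ y)) ⊗ₜ[k] Hb.one (-β) := by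
  -- coassociativity on `y`, splitting as `(-β, β, α)`
  have hy3 : y ∈ Hb.H ((-β) + β + α) γ := by
    rw [show ((-β) + β + α : G) = α by abel]; exact hy
  have hco := Hb.coassoc (-β) β α γ y hy3
  rw [show ((-β) + β : G) = 0 from neg_add_cancel β, show (β + α : G) = α + β from add_comm β α]
    at hco
  -- expand `gmap` as post-processing of a second comultiplication
  have hg : (TensorProduct.map (LinearMap.id (M := Hb.A ⊗[k] Hb.A)) (Hb.gmap α β γ))
      = (TensorProduct.map LinearMap.id
          ((TensorProduct.map (Hb.S α γ) (Hb.S β γ)) ∘ₗ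
            (TensorProduct.comm k Hb.A Hb.A).toLinearMap)) ∘ₗ
        (TensorProduct.map LinearMap.id (Hb.comul β α)) := by
    rw [← TensorProduct.map_comp, LinearMap.id_comp]
    rfl
  rw [hg, LinearMap.comp_apply, aux1, ← hco]
  -- now compute with explicit representations
  have hy0 : y ∈ Hb.H (0 + α) γ := by rwa [zero_add]
  obtain ⟨T, hT⟩ := Hb.comul_repr hy0
  -- counit identity : `∑ ε(t) • v = y`
  have hcu : (∑ p ∈ T, Hb.counit γ (p.1 : Hb.A) • (p.2 : Hb.A)) = y := by
    have := Hb.counit_comul α γ y hy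
    rw [hT] at this
    simpa [map_sum] using this
  simp only [hT, map_sum, tmul_sum]
  have term : ∀ p ∈ T,
      Hb.mmF ((TensorProduct.map LinearMap.id
          ((TensorProduct.map (Hb.S α γ) (Hb.S β γ)) ∘ₗ
            (TensorProduct.comm k Hb.A Hb.A).toLinearMap))
        ((TensorProduct.assoc k Hb.A Hb.A (Hb.A ⊗[k] Hb.A)).symm
          (e ⊗ₜ[k] ((TensorProduct.assoc k Hb.A Hb.A Hb.A)
            ((TensorProduct.map (Hb.comul (-β) β) LinearMap.id)
              ((p.1 : Hb.A) ⊗ₜ[k] (p.2 : Hb.A)))))))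
      = Hb.counit γ (p.1 : Hb.A) •
          ((Hb.mul e (Hb.S α γ (p.2 : Hb.A))) ⊗ₜ[k] Hb.one (-β)) := by
    intro p _
    have hp1 : (p.1 : Hb.A) ∈ Hb.H ((-β) + β) γ := by rw [neg_add_cancel]; exact p.1.2
    obtain ⟨U, hU⟩ := Hb.comul_repr hp1
    have har : (∑ q ∈ U, Hb.mul (q.1 : Hb.A) (Hb.S β γ (q.2 : Hb.A)))
        = Hb.counit γ (p.1 : Hb.A) • Hb.one (-β) := by
      have := Hb.antipode_right' β γ (p.1 : Hb.A) p.1.2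
      rw [hU] at this
      simpa [map_sum] using this
    rw [TensorProduct.map_tmul, hU]
    simp only [LinearMap.id_coe, id_eq, sum_tmul, map_sum, tmul_sum,
      TensorProduct.assoc_tmul, TensorProduct.assoc_symm_tmul, TensorProduct.map_tmul,
      LinearMap.coe_comp, LinearEquiv.coe_coe, Function.comp_apply, TensorProduct.comm_tmul,
      mmF_tmul]
    rw [← tmul_sum, har, tmul_smul]
  rw [Finset.sum_congr rfl term]
  conv_rhs => rw [← hcu]
  simp only [map_sum, map_smul, sum_tmul, TensorProduct.smul_tmul']

/-- convolution identity: `Δ * ((S ⊗ S) ∘ τ ∘ Δ) = ε • (1 ⊗ 1)` on `H 0 γ`. -/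
lemma lemB (α β γ : G) (w : Hb.A) (hw : w ∈ Hb.H 0 γ) :
    Hb.mmF ((TensorProduct.map (Hb.comul (-α) (-β)) (Hb.gmap α β γ))
        (Hb.comul (-(α + β)) (α + β) w)) =
      Hb.counit γ w • (Hb.one (-α) ⊗ₜ[k] Hb.one (-β)) := by
  have hw3 : w ∈ Hb.H ((-α) + (-β) + (α + β)) γ := by
    rw [show ((-α) + (-β) + (α + β) : G) = 0 by abel]; exact hw
  have hco := Hb.coassoc (-α) (-β) (α + β) γ w hw3
  rw [show ((-α) + (-β) : G) = -(α + β) from (neg_add α β).symm,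
    show ((-β) + (α + β) : G) = α by abel] at hco
  have hsplit : (TensorProduct.map (Hb.comul (-α) (-β)) (Hb.gmap α β γ))
      = (TensorProduct.map LinearMap.id (Hb.gmap α β γ)) ∘ₗ
        (TensorProduct.map (Hb.comul (-α) (-β)) LinearMap.id) := by
    rw [← TensorProduct.map_comp, LinearMap.id_comp, LinearMap.comp_id]
  have hDid : (TensorProduct.map (Hb.comul (-α) (-β)) LinearMap.id)
        (Hb.comul (-(α + β)) (α + β) w)
      = (TensorProduct.assoc k Hb.A Hb.A Hb.A).symm
          ((TensorProduct.map LinearMap.id (Hb.comul (-β) (α + β))) (Hb.comul (-α) α w)) := by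
    rw [← hco, LinearEquiv.symm_apply_apply]
  rw [hsplit, LinearMap.comp_apply, hDid]
  have hw2 : w ∈ Hb.H ((-α) + α) γ := by rw [neg_add_cancel]; exact hw
  obtain ⟨T, hT⟩ := Hb.comul_repr hw2
  have har : (∑ p ∈ T, Hb.mul (p.1 : Hb.A) (Hb.S α γ (p.2 : Hb.A)))
      = Hb.counit γ w • Hb.one (-α) := by
    have := Hb.antipode_right' α γ w hw
    rw [hT] at this
    simpa [map_sum] using this
  simp only [hT, map_sum, TensorProduct.map_tmul, LinearMap.id_coe, id_eq]
  rw [Finset.sum_congr rfl fun p _ => Hb.lemB_inner α β γ (p.1 : Hb.A) (p.2 : Hb.A) p.2.2]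
  rw [← sum_tmul, har, TensorProduct.smul_tmul']

theorem antipode_comul' (α β γ : G) (z : Hb.A) (hz : z ∈ Hb.H (α + β) γ) :
    Hb.comul (-α) (-β) (Hb.S (α + β) γ z) =
      (TensorProduct.map (Hb.S α γ) (Hb.S β γ))
        ((TensorProduct.comm k Hb.A Hb.A) (Hb.comul β α z)) := by
  have hR : (TensorProduct.map (Hb.S α γ) (Hb.S β γ))
      ((TensorProduct.comm k Hb.A Hb.A) (Hb.comul β α z)) = Hb.gmap α β γ z := rfl
  rw [hR]
  set inner := Hb.mmF ∘ₗ
    (TensorProduct.map (Hb.comul (-α) (-β) ∘ₗ Hb.S (α + β) γ) (Hb.comul (-α) (-β))) with hinner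
  -- first split of `z` as `(α+β, 0)`
  have hz0 : z ∈ Hb.H ((α + β) + 0) γ := by rwa [add_zero]
  obtain ⟨T, hT⟩ := Hb.comul_repr hz0
  have hcu : (∑ p ∈ T, Hb.counit γ (p.2 : Hb.A) • (p.1 : Hb.A)) = z := by
    have := Hb.comul_counit (α + β) γ z hz
    rw [hT] at this
    simpa [map_sum] using this
  -- step 1 : absorb the counit
  have step1 : Hb.comul (-α) (-β) (Hb.S (α + β) γ z)
      = ∑ p ∈ T, Hb.counit γ (p.2 : Hb.A) •
          (Hb.comul (-α) (-β) (Hb.S (α + β) γ (p.1 : Hb.A))) := by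
    conv_lhs => rw [← hcu]
    simp [map_sum, map_smul]
  -- step 2-4 : per-term rewriting
  have step2 : ∀ p ∈ T, Hb.counit γ (p.2 : Hb.A) •
        (Hb.comul (-α) (-β) (Hb.S (α + β) γ (p.1 : Hb.A)))
      = Hb.mmF ((TensorProduct.map inner (Hb.gmap α β γ))
          ((TensorProduct.assoc k Hb.A Hb.A Hb.A).symm
            ((p.1 : Hb.A) ⊗ₜ[k] (Hb.comul (-(α + β)) (α + β) (p.2 : Hb.A))))) := by
    intro p _
    have hf1 : Hb.comul (-α) (-β) (Hb.S (α + β) γ (p.1 : Hb.A)) ∈ LinearMap.range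
        (TensorProduct.map (Hb.H (-α) (-γ)).subtype (Hb.H (-β) (-γ)).subtype) :=
      Hb.f_range p.1.2
    have e1 : Hb.counit γ (p.2 : Hb.A) •
          (Hb.comul (-α) (-β) (Hb.S (α + β) γ (p.1 : Hb.A)))
        = Hb.mmF ((Hb.comul (-α) (-β) (Hb.S (α + β) γ (p.1 : Hb.A))) ⊗ₜ[k]
            (Hb.counit γ (p.2 : Hb.A) • (Hb.one (-α) ⊗ₜ[k] Hb.one (-β)))) := by
      rw [tmul_smul, map_smul, Hb.mmF_one_right hf1]
    rw [e1, ← Hb.lemB α β γ (p.2 : Hb.A) p.2.2]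
    -- now reassociate using `mmF_assoc` on a representation of the inner comultiplication
    have hp2 : (p.2 : Hb.A) ∈ Hb.H ((-(α + β)) + (α + β)) γ := by
      rw [neg_add_cancel]; exact p.2.2
    obtain ⟨U, hU⟩ := Hb.comul_repr hp2
    rw [hU]
    simp only [map_sum, tmul_sum, sum_tmul, TensorProduct.map_tmul]
    refine Finset.sum_congr rfl fun q _ => ?_
    have hv : Hb.comul (-α) (-β) (q.1 : Hb.A) ∈ LinearMap.range
        (TensorProduct.map (Hb.H (-α) γ).subtype (Hb.H (-β) γ).subtype) := by
      refine Hb.comul_mem ?_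
      rw [← neg_add]; exact q.1.2
    have hw : Hb.gmap α β γ (q.2 : Hb.A) ∈ LinearMap.range
        (TensorProduct.map (Hb.H (-α) (-γ)).subtype (Hb.H (-β) (-γ)).subtype) :=
      Hb.gmap_range q.2.2
    rw [Hb.mmF_assoc hf1 hv hw]
    simp [hinner, TensorProduct.assoc_symm_tmul]
  rw [step1, Finset.sum_congr rfl step2]
  -- reassemble the sum and apply coassociativity
  have hz3 : z ∈ Hb.H ((α + β) + (-(α + β)) + (α + β)) γ := by
    rw [show ((α + β) + (-(α + β)) + (α + β) : G) = α + β by abel]; exact hz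
  have hco2 := Hb.coassoc (α + β) (-(α + β)) (α + β) γ z hz3
  rw [show ((α + β) + (-(α + β)) : G) = 0 from add_neg_cancel _,
    show ((-(α + β)) + (α + β) : G) = 0 from neg_add_cancel _] at hco2
  have reassemble : (∑ p ∈ T, Hb.mmF ((TensorProduct.map inner (Hb.gmap α β γ))
        ((TensorProduct.assoc k Hb.A Hb.A Hb.A).symm
          ((p.1 : Hb.A) ⊗ₜ[k] (Hb.comul (-(α + β)) (α + β) (p.2 : Hb.A))))))
      = Hb.mmF ((TensorProduct.map inner (Hb.gmap α β γ))
          ((TensorProduct.assoc k Hb.A Hb.A Hb.A).symm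
            ((TensorProduct.map LinearMap.id (Hb.comul (-(α + β)) (α + β)))
              (Hb.comul (α + β) 0 z)))) := by
    rw [hT]
    simp [map_sum, tmul_sum]
  rw [reassemble, ← hco2, LinearEquiv.symm_apply_apply]
  -- final step : use `lemA` and the counit axiom
  have hz0' : z ∈ Hb.H (0 + (α + β)) γ := by rwa [zero_add]
  obtain ⟨U, hU⟩ := Hb.comul_repr hz0'
  have hcu2 : (∑ u ∈ U, Hb.counit γ (u.1 : Hb.A) • (u.2 : Hb.A)) = z := by
    have := Hb.counit_comul (α + β) γ z hz
    rw [hU] at this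
    simpa [map_sum] using this
  rw [hU]
  simp only [map_sum, TensorProduct.map_tmul, LinearMap.id_coe, id_eq]
  have final : ∀ u ∈ U, Hb.mmF ((inner (Hb.comul (α + β) (-(α + β)) (u.1 : Hb.A))) ⊗ₜ[k]
        (Hb.gmap α β γ (u.2 : Hb.A)))
      = Hb.counit γ (u.1 : Hb.A) • Hb.gmap α β γ (u.2 : Hb.A) := by
    intro u _
    have hA := Hb.lemA α β γ (u.1 : Hb.A) u.1.2
    rw [hinner, LinearMap.comp_apply, hA, ← TensorProduct.smul_tmul', map_smul,
      Hb.mmF_one_left (Hb.gmap_range u.2.2)]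
  rw [Finset.sum_congr rfl final]
  simp only [← map_smul]
  rw [← map_sum, hcu2]

end HopfGBialgebra

/-- (H12): the antipode is an anti-homomorphism for the coproduct:
`Δ_{-α,-β}^{-γ} ∘ S_{α+β}^γ = (S_α^γ ⊗ S_β^γ) ∘ τ ∘ Δ_{β,α}^γ` on `H_{α+β}^γ`. -/
theorem HopfGBialgebra.antipode_comul {k G : Type*} [Field k] [AddCommGroup G]
    (Hb : HopfGBialgebra k G) (α β γ : G) (z : Hb.A) (hz : z ∈ Hb.H (α + β) γ) :
    Hb.comul (-α) (-β) (Hb.S (α + β) γ z) =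
      (TensorProduct.map (Hb.S α γ) (Hb.S β γ))
        ((TensorProduct.comm k Hb.A Hb.A) (Hb.comul β α z)) := by
  exact Hb.antipode_comul' α β γ z hz
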